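/- Let P be a submonoid of a (discrete) group G. There is a unital algebra isomorphism ψ from 𝒯_λ(P)⁺ onto 𝒯̄_λ(P)⁺ with ψ(L_p) = L̄_p for all p ∈ P, which is completely isometric: for every n ≥ 1, the induced map on n×n matrices over these algebras is isometric. -/

import Mathlib

noncomputable section
set_option synthInstance.maxHeartbeats 1000000
set_option maxHeartbeats 1000000
set_option linter.unusedVariables false

open scoped ENNReal

/-- `ℓ²(ι)` with complex coefficients. -/
abbrev l2 (ι : Type*) : Type _ := lp (fun _ : ι => ℂ) 2

/-- The canonical orthonormal basis vector `δ_i` of `ℓ²(ι)`. -/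
noncomputable def ket {ι : Type*} (i : ι) : l2 ι :=
  haveI := Classical.decEq ι
  lp.single 2 i 1

variable {G : Type*} [Group G]

/-- A word `a = (p₁, p₂, …, p_{2k-1}, p_{2k})` of even length over `P`, recorded as the list of
its consecutive pairs `(p₁,p₂), (p₃,p₄), …, (p_{2k-1},p_{2k})`. -/
abbrev Word (P : Submonoid G) := List (P × P)

/-- `ȧ = p₁⁻¹ p₂ ⋯ p_{2k-1}⁻¹ p_{2k} ∈ G`. -/
def wordElem (P : Submonoid G) (w : Word P) : G :=
  (w.map (fun pq => ((pq.1 : G))⁻¹ * (pq.2 : G))).prod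

/-- A word is neutral if `ȧ = e`. -/
def IsNeutral (P : Submonoid G) (w : Word P) : Prop := wordElem P w = 1

/-- `V̇_a = V_{p₁}^* V_{p₂} ⋯ V_{p_{2k-1}}^* V_{p_{2k}}`. -/
def dotted {A : Type*} [Monoid A] [Star A] (P : Submonoid G) (V : P → A) (w : Word P) : A :=
  (w.map (fun pq => star (V pq.1) * V pq.2)).prod

/-- The constructible right ideal `K(a) = {p ∈ P : L̇_a δ_p = δ_p}`, where `L` is the left
regular representation of `P` on `ℓ²(P)`. -/
def KIdeal (P : Submonoid G) (L : P → (l2 P →L[ℂ] l2 P)) (w : Word P) : Set P :=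
  {p : P | dotted P L w (ket p) = ket p}

/-- The index set `X = ⨿_{n ≥ 1} Pⁿ` underlying `ℋ̄ = ⊕_{n≥1} ℓ²(P)^{⊗n} ≅ ℓ²(X)`. -/
abbrev PTuples (P : Submonoid G) := Σ n : ℕ, Fin (n + 1) → P

/-- Coordinatewise left multiplication of a tuple by `p`; `L̄_p δ_x = δ_{p • x}`. -/
def pMul (P : Submonoid G) (p : P) (x : PTuples P) : PTuples P := ⟨x.1, fun i => p * x.2 i⟩

/-- The operator on the `n`-fold Hilbert-space direct sum `H^n` (with its `ℓ²`-norm) induced by an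
`n × n` matrix of bounded operators on `H`; used to express matrix amplifications. -/
noncomputable def amp {H : Type*} [NormedAddCommGroup H] [InnerProductSpace ℂ H] {n : ℕ}
    (T : Fin n → Fin n → (H →L[ℂ] H)) :
    PiLp 2 (fun _ : Fin n => H) →L[ℂ] PiLp 2 (fun _ : Fin n => H) :=
  (PiLp.continuousLinearEquiv 2 ℂ (fun _ : Fin n => H)).symm.toContinuousLinearMap ∘L
    ContinuousLinearMap.pi
      (fun i => ∑ j, (T i j) ∘L (PiLp.proj (𝕜 := ℂ) 2 (fun _ : Fin n => H) j))

/-!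
`ℓ²(P)` is the summand of `ℋ̄` spanned by the one-tuples, and `L` is the restriction of `L̄` to
it. Conversely, `(q₀, …, qₙ) ↦ ((q₀⁻¹q₀, …, q₀⁻¹qₙ), q₀)` identifies `ℋ̄` with an invariant
subspace of `⨁_z ℓ²(P)` on which `L̄_p` acts as `L_p` in every summand. So every matrix of
noncommutative polynomials in the generators has the same norm under `L` and under `L̄`.
Compressing along the first embedding `J`, `B ↦ J* B J`, is then a complete isometry from the
closed algebra of `L̄` onto that of `L`; it is multiplicative because the range of `J` is
invariant, and `ψ` is its inverse.
-/

section L2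

variable {ι κ α β : Type*}

lemma coe_default_hilbertBasis : ⇑(default : HilbertBasis ι ℂ (l2 ι)) = ket := rfl

lemma orthonormal_ket : Orthonormal ℂ (ket : ι → l2 ι) :=
  coe_default_hilbertBasis (ι := ι) ▸ HilbertBasis.orthonormal _

lemma ContinuousLinearMap.ext_ket {E : Type*} [NormedAddCommGroup E] [NormedSpace ℂ E]
    {A B : l2 ι →L[ℂ] E} (h : ∀ i, A (ket i) = B (ket i)) : A = B := by
  refine ContinuousLinearMap.ext_on (Submodule.dense_iff_topologicalClosure_eq_top.mpr
    (default : HilbertBasis ι ℂ (l2 ι)).dense_span) ?_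
  rintro _ ⟨i, rfl⟩
  exact h i

lemma apply_comm_of_apply_ket_comm {E : Type*} [NormedAddCommGroup E] [NormedSpace ℂ E]
    (f : l2 ι →L[ℂ] E) {A : l2 ι →L[ℂ] l2 ι} {B : E →L[ℂ] E}
    (h : ∀ i, f (A (ket i)) = B (f (ket i))) (v : l2 ι) : f (A v) = B (f v) :=
  congr($(ContinuousLinearMap.ext_ket (A := f ∘L A) (B := B ∘L f) h) v)

lemma inner_ket_left (i : ι) (v : l2 ι) : inner ℂ (ket i) v = v i :=
  ((default : HilbertBasis ι ℂ (l2 ι)).repr_apply_apply v i).symm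

lemma ket_apply (i j : ι) [DecidableEq ι] : (ket i : l2 ι) j = if j = i then 1 else 0 := by
  rw [← inner_ket_left]
  simpa using orthonormal_iff_ite.mp orthonormal_ket j i

lemma hasSum_norm_sq (v : l2 ι) : HasSum (fun i => ‖v i‖ ^ 2) (‖v‖ ^ 2) := by
  simpa using lp.hasSum_norm (p := 2) (by simp) v

def l2Embed (f : ι → κ) (hf : Function.Injective f) : l2 ι →ₗᵢ[ℂ] l2 κ :=
  ((orthonormal_ket.comp f hf).orthogonalFamily).linearIsometry

lemma l2Embed_ket (f : ι → κ) (hf : Function.Injective f) (i : ι) :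
    l2Embed f hf (ket i) = ket (f i) := by
  -- `ket` is `lp.single` for the classical decidable equality
  let _ := Classical.decEq ι
  have := (orthonormal_ket.comp f hf).orthogonalFamily.linearIsometry_apply_single (i := i) (1 : ℂ)
  rw [LinearIsometry.toSpanSingleton_apply, one_smul] at this
  exact this

def l2Slice (b : β) : l2 (β × α) →L[ℂ] l2 α :=
  ContinuousLinearMap.adjoint
    (l2Embed (Prod.mk b) (Prod.mk_right_injective b)).toContinuousLinearMap

lemma l2Slice_apply (b : β) (v : l2 (β × α)) (a : α) : l2Slice b v a = v (b, a) := by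
  rw [← inner_ket_left, l2Slice, ContinuousLinearMap.adjoint_inner_right]
  simp [l2Embed_ket, inner_ket_left]

lemma l2Slice_ket [DecidableEq β] (b c : β) (a : α) :
    l2Slice b (ket (c, a)) = if c = b then ket a else 0 := by
  classical
  ext a'
  rw [l2Slice_apply]
  split_ifs with h
  · simp [ket_apply, h]
  · simp [ket_apply, Ne.symm h]

lemma hasSum_norm_l2Slice_sq (v : l2 (β × α)) :
    HasSum (fun b => ‖l2Slice b v‖ ^ 2) (‖v‖ ^ 2) :=
  (hasSum_norm_sq v).prod_fiberwise fun b => by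
    simpa [l2Slice_apply] using hasSum_norm_sq (l2Slice b v)

end L2

section OperatorNorm

variable {𝕜 E F Z : Type*} [NontriviallyNormedField 𝕜] [SeminormedAddCommGroup E] [NormedSpace 𝕜 E]
  [SeminormedAddCommGroup F] [NormedSpace 𝕜 F]

lemma ContinuousLinearMap.opNorm_le_of_isometric_intertwiner (f : E → F)
    (hf : ∀ v, ‖f v‖ = ‖v‖) {A : E →L[𝕜] E} {B : F →L[𝕜] F} (h : ∀ v, f (A v) = B (f v)) :
    ‖A‖ ≤ ‖B‖ :=
  A.opNorm_le_bound (norm_nonneg B) fun v =>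
    calc ‖A v‖ = ‖B (f v)‖ := by rw [← h, hf]
      _ ≤ ‖B‖ * ‖f v‖ := B.le_opNorm _
      _ = ‖B‖ * ‖v‖ := by rw [hf]

lemma ContinuousLinearMap.opNorm_le_of_parseval_intertwiner (p : Z → F → E)
    (hp : ∀ v, HasSum (fun z => ‖p z v‖ ^ 2) (‖v‖ ^ 2)) {A : E →L[𝕜] E} {B : F →L[𝕜] F}
    (h : ∀ z v, p z (B v) = A (p z v)) : ‖B‖ ≤ ‖A‖ := by
  refine B.opNorm_le_bound (norm_nonneg A) fun v => ?_
  refine (sq_le_sq₀ (norm_nonneg _) (by positivity)).mp ?_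
  have hBv : HasSum (fun z => ‖A (p z v)‖ ^ 2) (‖B v‖ ^ 2) := by simpa only [h] using hp (B v)
  rw [mul_pow]
  refine hasSum_le (fun z => ?_) hBv ((hp v).mul_left _)
  rw [← mul_pow]
  gcongr
  exact A.le_opNorm _

end OperatorNorm

section Amplification

variable {E F Z : Type*} [NormedAddCommGroup E] [NormedAddCommGroup F] {n : ℕ}

def diagAmp (n : ℕ) (f : E → F) : PiLp 2 (fun _ : Fin n => E) → PiLp 2 (fun _ : Fin n => F) :=
  fun v => WithLp.toLp 2 fun i => f (v i)

lemma norm_diagAmp {f : E → F} (hf : ∀ v, ‖f v‖ = ‖v‖) (v : PiLp 2 (fun _ : Fin n => E)) :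
    ‖diagAmp n f v‖ = ‖v‖ := by
  simp [PiLp.norm_eq_of_L2, diagAmp, hf]

lemma hasSum_norm_diagAmp_sq {p : Z → E → F} (hp : ∀ v, HasSum (fun z => ‖p z v‖ ^ 2) (‖v‖ ^ 2))
    (v : PiLp 2 (fun _ : Fin n => E)) :
    HasSum (fun z => ‖diagAmp n (p z) v‖ ^ 2) (‖v‖ ^ 2) := by
  simp only [PiLp.norm_sq_eq_of_L2, diagAmp]
  exact hasSum_sum fun i _ => hp (v i)

variable [InnerProductSpace ℂ E] [InnerProductSpace ℂ F]

lemma amp_apply (T : Fin n → Fin n → (E →L[ℂ] E)) (v : PiLp 2 (fun _ : Fin n => E)) (i : Fin n) :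
    amp T v i = ∑ j, T i j (v j) := by
  simp [amp, ContinuousLinearMap.pi, PiLp.proj]

@[fun_prop]
lemma continuous_amp :
    Continuous (amp : (Fin n → Fin n → (E →L[ℂ] E)) → _) :=
  continuous_const.clm_comp <|
    (ContinuousLinearMap.piEquivL ℂ (PiLp 2 fun _ : Fin n => E) fun _ : Fin n => E).continuous.comp
      (by fun_prop)

lemma diagAmp_amp (f : E →L[ℂ] F) {T : Fin n → Fin n → (E →L[ℂ] E)}
    {T' : Fin n → Fin n → (F →L[ℂ] F)} (h : ∀ i j v, f (T i j v) = T' i j (f v))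
    (v : PiLp 2 (fun _ : Fin n => E)) :
    diagAmp n f (amp T v) = amp T' (diagAmp n f v) := by
  ext i
  simp [diagAmp, amp_apply, h]

end Amplification

lemma Set.EqOn.closure_entrywise {ι κ α β : Type*} [TopologicalSpace α] [TopologicalSpace β]
    [T2Space β] {s : Set α} {f g : (ι → κ → α) → β} (h : Set.EqOn f g {T | ∀ i j, T i j ∈ s})
    (hf : Continuous f) (hg : Continuous g) :
    Set.EqOn f g {T | ∀ i j, T i j ∈ closure s} := by
  have hs (t : Set α) :
      {T : ι → κ → α | ∀ i j, T i j ∈ t} = Set.univ.pi fun _ => Set.univ.pi fun _ => t := by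
    ext; simp
  simpa only [hs, closure_pi_set] using h.closure hf hg

lemma Algebra.coe_topologicalClosure_adjoin_range {R A ι : Type*} [CommSemiring R] [Semiring A]
    [Algebra R A] [TopologicalSpace A] [IsTopologicalSemiring A] (V : ι → A) :
    ((Algebra.adjoin R (Set.range V)).topologicalClosure : Set A) =
      closure (Set.range (FreeAlgebra.lift R V)) := by
  rw [Subalgebra.topologicalClosure_coe, Algebra.adjoin_range_eq_range_freeAlgebra_lift]
  rfl

lemma FreeAlgebra.lift_apply_comm {𝕜 ι E F : Type*} [NontriviallyNormedField 𝕜]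
    [NormedAddCommGroup E] [NormedSpace 𝕜 E] [NormedAddCommGroup F] [NormedSpace 𝕜 F]
    {V : ι → (E →L[𝕜] E)} {W : ι → (F →L[𝕜] F)} (f : E →L[𝕜] F)
    (h : ∀ i v, f (V i v) = W i (f v)) (x : FreeAlgebra 𝕜 ι) (v : E) :
    f (FreeAlgebra.lift 𝕜 V x v) = FreeAlgebra.lift 𝕜 W x (f v) := by
  induction x using FreeAlgebra.induction generalizing v with
  | grade0 r => simp [Algebra.algebraMap_eq_smul_one]
  | grade1 i => simpa using h i v
  | mul a b ha hb => simp [ha, hb]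
  | add a b ha hb => simp [ha, hb]

section Dilation

variable {ι Z H K : Type*} [NormedAddCommGroup H] [InnerProductSpace ℂ H]
  [NormedAddCommGroup K] [InnerProductSpace ℂ K] {V : ι → (H →L[ℂ] H)} {W : ι → (K →L[ℂ] K)}

lemma norm_lift_eq_of_dilation (J : H →ₗᵢ[ℂ] K) (hJ : ∀ i v, J (V i v) = W i (J v))
    (p : Z → (K →L[ℂ] H)) (hp : ∀ v, HasSum (fun z => ‖p z v‖ ^ 2) (‖v‖ ^ 2))
    (hpW : ∀ z i v, p z (W i v) = V i (p z v)) (x : FreeAlgebra ℂ ι) :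
    ‖FreeAlgebra.lift ℂ W x‖ = ‖FreeAlgebra.lift ℂ V x‖ :=
  le_antisymm
    (ContinuousLinearMap.opNorm_le_of_parseval_intertwiner (fun z => p z) hp
      fun z => FreeAlgebra.lift_apply_comm (p z) (hpW z) x)
    (ContinuousLinearMap.opNorm_le_of_isometric_intertwiner J J.norm_map
      (FreeAlgebra.lift_apply_comm J.toContinuousLinearMap hJ x))

lemma norm_amp_lift_eq_of_dilation (J : H →ₗᵢ[ℂ] K) (hJ : ∀ i v, J (V i v) = W i (J v))
    (p : Z → (K →L[ℂ] H)) (hp : ∀ v, HasSum (fun z => ‖p z v‖ ^ 2) (‖v‖ ^ 2))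
    (hpW : ∀ z i v, p z (W i v) = V i (p z v)) {n : ℕ} (x : Fin n → Fin n → FreeAlgebra ℂ ι) :
    ‖amp fun i j => FreeAlgebra.lift ℂ W (x i j)‖ = ‖amp fun i j => FreeAlgebra.lift ℂ V (x i j)‖ :=
  le_antisymm
    (ContinuousLinearMap.opNorm_le_of_parseval_intertwiner (fun z => diagAmp n (p z))
      (hasSum_norm_diagAmp_sq hp)
      fun z => diagAmp_amp (p z) fun i j => FreeAlgebra.lift_apply_comm (p z) (hpW z) (x i j))
    (ContinuousLinearMap.opNorm_le_of_isometric_intertwiner (diagAmp n J) (norm_diagAmp J.norm_map)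
      (diagAmp_amp J.toContinuousLinearMap fun i j =>
        FreeAlgebra.lift_apply_comm J.toContinuousLinearMap hJ (x i j)))

variable [CompleteSpace H] [CompleteSpace K]

def compression (J : H →ₗᵢ[ℂ] K) : (K →L[ℂ] K) →L[ℂ] (H →L[ℂ] H) :=
  ContinuousLinearMap.compL ℂ H K H (ContinuousLinearMap.adjoint J.toContinuousLinearMap) ∘L
    (ContinuousLinearMap.compL ℂ H K K).flip J.toContinuousLinearMap

lemma compression_apply (J : H →ₗᵢ[ℂ] K) (B : K →L[ℂ] K) :
    compression J B =
      ContinuousLinearMap.adjoint J.toContinuousLinearMap ∘L B ∘L J.toContinuousLinearMap :=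
  rfl

lemma compression_eq_of_intertwine (J : H →ₗᵢ[ℂ] K) {A : H →L[ℂ] H} {B : K →L[ℂ] K}
    (h : ∀ v, J (A v) = B (J v)) : compression J B = A := by
  ext v
  calc ContinuousLinearMap.adjoint J.toContinuousLinearMap (B (J v))
      _ = ContinuousLinearMap.adjoint J.toContinuousLinearMap (J (A v)) := by rw [h]
      _ = A v := congr($(J.adjoint_comp_self) (A v))

lemma compression_lift (J : H →ₗᵢ[ℂ] K) (hJ : ∀ i v, J (V i v) = W i (J v))
    (x : FreeAlgebra ℂ ι) : compression J (FreeAlgebra.lift ℂ W x) = FreeAlgebra.lift ℂ V x :=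
  compression_eq_of_intertwine J (FreeAlgebra.lift_apply_comm J.toContinuousLinearMap hJ x)

lemma comp_compression_of_mem (J : H →ₗᵢ[ℂ] K) (hJ : ∀ i v, J (V i v) = W i (J v))
    {B : K →L[ℂ] K} (hB : B ∈ (Algebra.adjoin ℂ (Set.range W)).topologicalClosure) :
    J.toContinuousLinearMap ∘L compression J B = B ∘L J.toContinuousLinearMap := by
  rw [← SetLike.mem_coe, Algebra.coe_topologicalClosure_adjoin_range] at hB
  refine Set.EqOn.closure ?_ (continuous_const.clm_comp (compression J).continuous)
    (continuous_id.clm_comp continuous_const) hB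
  rintro _ ⟨x, rfl⟩
  ext v
  simp [compression_lift J hJ, FreeAlgebra.lift_apply_comm J.toContinuousLinearMap hJ]

lemma compression_mul_of_mem (J : H →ₗᵢ[ℂ] K) (hJ : ∀ i v, J (V i v) = W i (J v))
    (A : K →L[ℂ] K) {B : K →L[ℂ] K} (hB : B ∈ (Algebra.adjoin ℂ (Set.range W)).topologicalClosure) :
    compression J (A * B) = compression J A * compression J B := by
  rw [ContinuousLinearMap.mul_def, ContinuousLinearMap.mul_def, compression_apply J (A ∘L B),
    compression_apply J A, ContinuousLinearMap.comp_assoc A, ← comp_compression_of_mem J hJ hB]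
  simp only [ContinuousLinearMap.comp_assoc]

lemma compression_mem (J : H →ₗᵢ[ℂ] K) (hJ : ∀ i v, J (V i v) = W i (J v))
    {B : K →L[ℂ] K} (hB : B ∈ (Algebra.adjoin ℂ (Set.range W)).topologicalClosure) :
    compression J B ∈ (Algebra.adjoin ℂ (Set.range V)).topologicalClosure := by
  rw [← SetLike.mem_coe, Algebra.coe_topologicalClosure_adjoin_range] at hB ⊢
  refine map_mem_closure (compression J).continuous hB ?_
  rintro _ ⟨x, rfl⟩
  exact ⟨x, (compression_lift J hJ x).symm⟩

lemma norm_compression_of_mem (J : H →ₗᵢ[ℂ] K) (hJ : ∀ i v, J (V i v) = W i (J v))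
    (p : Z → (K →L[ℂ] H)) (hp : ∀ v, HasSum (fun z => ‖p z v‖ ^ 2) (‖v‖ ^ 2))
    (hpW : ∀ z i v, p z (W i v) = V i (p z v))
    {B : K →L[ℂ] K} (hB : B ∈ (Algebra.adjoin ℂ (Set.range W)).topologicalClosure) :
    ‖compression J B‖ = ‖B‖ := by
  rw [← SetLike.mem_coe, Algebra.coe_topologicalClosure_adjoin_range] at hB
  refine Set.EqOn.closure ?_ (continuous_norm.comp (compression J).continuous) continuous_norm hB
  rintro _ ⟨x, rfl⟩
  show ‖compression J (FreeAlgebra.lift ℂ W x)‖ = ‖FreeAlgebra.lift ℂ W x‖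
  rw [compression_lift J hJ, norm_lift_eq_of_dilation J hJ p hp hpW]

lemma norm_amp_compression_of_mem (J : H →ₗᵢ[ℂ] K) (hJ : ∀ i v, J (V i v) = W i (J v))
    (p : Z → (K →L[ℂ] H)) (hp : ∀ v, HasSum (fun z => ‖p z v‖ ^ 2) (‖v‖ ^ 2))
    (hpW : ∀ z i v, p z (W i v) = V i (p z v)) {n : ℕ} {T : Fin n → Fin n → (K →L[ℂ] K)}
    (hT : ∀ i j, T i j ∈ (Algebra.adjoin ℂ (Set.range W)).topologicalClosure) :
    ‖amp fun i j => compression J (T i j)‖ = ‖amp T‖ := by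
  simp only [← SetLike.mem_coe, Algebra.coe_topologicalClosure_adjoin_range] at hT
  refine Set.EqOn.closure_entrywise (f := fun T => ‖amp fun i j => compression J (T i j)‖)
    (g := fun T => ‖amp T‖) (fun T (hT : ∀ i j, T i j ∈ _) => ?_)
    (continuous_norm.comp (continuous_amp.comp (by fun_prop))) (by fun_prop) hT
  choose x hx using hT
  obtain rfl : T = fun i j => FreeAlgebra.lift ℂ W (x i j) := funext₂ fun i j => (hx i j).symm
  simp only [compression_lift J hJ]
  exact (norm_amp_lift_eq_of_dilation J hJ p hp hpW x).symm

def compressionAlgHom (J : H →ₗᵢ[ℂ] K) (hJ : ∀ i v, J (V i v) = W i (J v)) :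
    (Algebra.adjoin ℂ (Set.range W)).topologicalClosure →ₐ[ℂ]
      (Algebra.adjoin ℂ (Set.range V)).topologicalClosure where
  toFun B := ⟨compression J B, compression_mem J hJ B.2⟩
  map_one' := Subtype.ext (compression_eq_of_intertwine J fun _ => rfl)
  map_mul' A B := Subtype.ext (compression_mul_of_mem J hJ A B.2)
  map_zero' := Subtype.ext (map_zero _)
  map_add' A B := Subtype.ext (map_add _ _ _)
  commutes' r := Subtype.ext <| compression_eq_of_intertwine J fun v => by
    simp [Algebra.algebraMap_eq_smul_one]

lemma compressionAlgHom_bijective (J : H →ₗᵢ[ℂ] K) (hJ : ∀ i v, J (V i v) = W i (J v))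
    (p : Z → (K →L[ℂ] H)) (hp : ∀ v, HasSum (fun z => ‖p z v‖ ^ 2) (‖v‖ ^ 2))
    (hpW : ∀ z i v, p z (W i v) = V i (p z v)) :
    Function.Bijective (compressionAlgHom J hJ) := by
  have hiso : Isometry (compressionAlgHom J hJ) :=
    AddMonoidHomClass.isometry_of_norm _ fun B => norm_compression_of_mem J hJ p hp hpW B.2
  have hdense : Dense (Set.range (compressionAlgHom J hJ)) := by
    rw [Subtype.dense_iff]
    intro A hA
    rw [SetLike.mem_coe, ← SetLike.mem_coe, Algebra.coe_topologicalClosure_adjoin_range] at hA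
    refine closure_mono ?_ hA
    rintro _ ⟨x, rfl⟩
    have hx : FreeAlgebra.lift ℂ W x ∈ (Algebra.adjoin ℂ (Set.range W)).topologicalClosure := by
      rw [← SetLike.mem_coe, Algebra.coe_topologicalClosure_adjoin_range]
      exact subset_closure ⟨x, rfl⟩
    exact ⟨_, ⟨⟨_, hx⟩, rfl⟩, compression_lift J hJ x⟩
  have : CompleteSpace (Algebra.adjoin ℂ (Set.range W)).topologicalClosure :=
    (Subalgebra.isClosed_topologicalClosure _).completeSpace_coe
  have hrange := hdense.closure_eq
  rw [hiso.isClosedEmbedding.isClosed_range.closure_eq] at hrange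
  exact ⟨hiso.injective, Set.range_eq_univ.mp hrange⟩

theorem exists_completelyIsometric_algHom_of_dilation (J : H →ₗᵢ[ℂ] K)
    (hJ : ∀ i v, J (V i v) = W i (J v))
    (p : Z → (K →L[ℂ] H)) (hp : ∀ v, HasSum (fun z => ‖p z v‖ ^ 2) (‖v‖ ^ 2))
    (hpW : ∀ z i v, p z (W i v) = V i (p z v)) :
    ∃ ψ : (Algebra.adjoin ℂ (Set.range V)).topologicalClosure →ₐ[ℂ]
        (Algebra.adjoin ℂ (Set.range W)).topologicalClosure,
      Function.Bijective ψ ∧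
      (∀ i (h : V i ∈ (Algebra.adjoin ℂ (Set.range V)).topologicalClosure)
        (h' : W i ∈ (Algebra.adjoin ℂ (Set.range W)).topologicalClosure),
        ψ ⟨V i, h⟩ = ⟨W i, h'⟩) ∧
      ∀ (n : ℕ) (T : Fin n → Fin n → (Algebra.adjoin ℂ (Set.range V)).topologicalClosure),
        ‖amp fun i j => (ψ (T i j) : K →L[ℂ] K)‖ = ‖amp fun i j => (T i j : H →L[ℂ] H)‖ := by
  let e := AlgEquiv.ofBijective _ (compressionAlgHom_bijective J hJ p hp hpW)
  refine ⟨e.symm.toAlgHom, e.symm.bijective, fun i h h' => ?_, fun n T => ?_⟩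
  · show e.symm _ = _
    rw [AlgEquiv.symm_apply_eq]
    exact Subtype.ext (compression_eq_of_intertwine J (hJ i)).symm
  · have hT : ∀ i j, (T i j : H →L[ℂ] H) = compression J (e.symm (T i j)) := fun i j =>
      congrArg Subtype.val (e.apply_symm_apply (T i j)).symm
    simp only [hT]
    exact (norm_amp_compression_of_mem J hJ p hp hpW fun i j => (e.symm (T i j)).2).symm

end Dilation

section Enhanced

variable (P : Submonoid G)

def shapeSplit (x : PTuples P) : (Σ n : ℕ, Fin (n + 1) → G) × P :=
  (⟨x.1, fun i => (x.2 0 : G)⁻¹ * x.2 i⟩, x.2 0)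

lemma shapeSplit_injective : Function.Injective (shapeSplit P) := by
  rintro ⟨n, x⟩ ⟨m, y⟩ h
  simp only [shapeSplit, Prod.mk.injEq, Sigma.mk.injEq] at h
  obtain ⟨⟨rfl, hxy⟩, h0⟩ := h
  refine Sigma.ext rfl (heq_of_eq (funext fun i => Subtype.ext ?_))
  simpa [h0] using congrFun (eq_of_heq hxy) i

lemma shapeSplit_pMul (p : P) (x : PTuples P) :
    shapeSplit P (pMul P p x) = ((shapeSplit P x).1, p * (shapeSplit P x).2) := by
  simp only [shapeSplit, pMul, Submonoid.coe_mul, mul_inv_rev, mul_assoc, inv_mul_cancel_left]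
  rfl

def firstSummand : l2 P →ₗᵢ[ℂ] l2 (PTuples P) :=
  l2Embed (fun q => ⟨0, fun _ => q⟩) fun _ _ h => congrFun (eq_of_heq (Sigma.mk.inj h).2) 0

lemma firstSummand_ket (q : P) : firstSummand P (ket q) = ket ⟨0, fun _ => q⟩ :=
  l2Embed_ket _ _ q

def shapeSlice (z : Σ n : ℕ, Fin (n + 1) → G) : l2 (PTuples P) →L[ℂ] l2 P :=
  l2Slice z ∘L (l2Embed (shapeSplit P) (shapeSplit_injective P)).toContinuousLinearMap

lemma hasSum_norm_shapeSlice_sq (v : l2 (PTuples P)) :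
    HasSum (fun z => ‖shapeSlice P z v‖ ^ 2) (‖v‖ ^ 2) :=
  (l2Embed (shapeSplit P) (shapeSplit_injective P)).norm_map v ▸
    hasSum_norm_l2Slice_sq (l2Embed (shapeSplit P) (shapeSplit_injective P) v)

lemma shapeSlice_ket [DecidableEq (Σ n : ℕ, Fin (n + 1) → G)] (z : Σ n : ℕ, Fin (n + 1) → G)
    (x : PTuples P) :
    shapeSlice P z (ket x) = if (shapeSplit P x).1 = z then ket (shapeSplit P x).2 else 0 := by
  simp only [shapeSlice, ContinuousLinearMap.comp_apply, LinearIsometry.coe_toContinuousLinearMap,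
    l2Embed_ket]
  exact l2Slice_ket z (shapeSplit P x).1 (shapeSplit P x).2

end Enhanced

/-- **(Theorem 5.1.)**  The non-selfadjoint norm-closed algebra `𝒯̄_λ(P)⁺` generated by the
enhanced left regular representation is completely isometrically isomorphic to the tensor
algebra `𝒯_λ(P)⁺` via a map sending generators to generators. -/
theorem tensorAlgebra_iso_enhanced (P : Submonoid G)
    (L : P → (l2 P →L[ℂ] l2 P))
    (hL : ∀ p q : P, L p (ket q) = ket (p * q))
    (Lbar : P → (l2 (PTuples P) →L[ℂ] l2 (PTuples P)))
    (hLbar : ∀ (p : P) (x : PTuples P), Lbar p (ket x) = ket (pMul P p x)) :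
    ∃ ψ : (Algebra.adjoin ℂ (Set.range L)).topologicalClosure →ₐ[ℂ]
        (Algebra.adjoin ℂ (Set.range Lbar)).topologicalClosure,
      Function.Bijective ψ ∧
      (∀ (p : P) (h : L p ∈ (Algebra.adjoin ℂ (Set.range L)).topologicalClosure)
        (h' : Lbar p ∈ (Algebra.adjoin ℂ (Set.range Lbar)).topologicalClosure),
        ψ ⟨L p, h⟩ = ⟨Lbar p, h'⟩) ∧
      (∀ (n : ℕ) (T : Fin n → Fin n →
          (Algebra.adjoin ℂ (Set.range L)).topologicalClosure),
        ‖amp (fun i j => ((ψ (T i j) : l2 (PTuples P) →L[ℂ] l2 (PTuples P))))‖ =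
          ‖amp (fun i j => ((T i j : l2 P →L[ℂ] l2 P)))‖) := by
  classical
  refine exists_completelyIsometric_algHom_of_dilation (firstSummand P)
    (fun p => apply_comm_of_apply_ket_comm (firstSummand P).toContinuousLinearMap fun q => ?_)
    (shapeSlice P) (hasSum_norm_shapeSlice_sq P)
    (fun z p => apply_comm_of_apply_ket_comm (shapeSlice P z) fun x => ?_)
  · simp only [LinearIsometry.coe_toContinuousLinearMap, hL, firstSummand_ket, hLbar]
    rfl
  · simp only [hLbar, shapeSlice_ket, shapeSplit_pMul]
    split_ifs <;> simp [hL]
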